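/- arXiv:2004.05613 — 2 statements merged into one kernel-verified Lean document; each statement's English description precedes it below -/
import Mathlib

section
/- Let d ∈ ℝⁿ have strictly positive entries, D = diag(d), and let A, B ∈ ℂ^{n×n} both be diagonal. Then there exists a quantum channel T (linear, completely positive, trace-preserving) with T(D) = D and T(B) = A if and only if there exists a column-stochastic matrix M ∈ ℝ^{n×n} with Md = d mapping the diagonal vector of B to the diagonal vector of A. -/
/-!
Every positive map `T` sends the diagonal units `Eⱼⱼ` to positive matrices, so the diagonals of
the `T Eⱼⱼ` are real, nonnegative and, by trace preservation, sum to one: they form a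
column-stochastic matrix, and by linearity this matrix describes the action of `T` on diagonal
matrices. Conversely, a column-stochastic `M` is realised by the channel
`X ↦ ∑ᵢₖ Mᵢₖ Eᵢₖ X Eₖᵢ = diag (M (diag X))`, completely positive as a nonnegative combination
of conjugations.
-/

open Matrix
open scoped ComplexOrder

/-- The map `T ⊗ id_m` acting in block form. -/
noncomputable def tensorId {n k : ℕ}
    (T : Matrix (Fin n) (Fin n) ℂ →ₗ[ℂ] Matrix (Fin k) (Fin k) ℂ) (m : ℕ)
    (A : Matrix (Fin n × Fin m) (Fin n × Fin m) ℂ) :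
    Matrix (Fin k × Fin m) (Fin k × Fin m) ℂ :=
  Matrix.of fun p q => T (Matrix.of fun i j => A (i, p.2) (j, q.2)) p.1 q.1

/-- A quantum channel: a linear map which is completely positive and trace-preserving. -/
def IsQuantumChannel {n : ℕ}
    (T : Matrix (Fin n) (Fin n) ℂ →ₗ[ℂ] Matrix (Fin n) (Fin n) ℂ) : Prop :=
  (∀ (m : ℕ) (A : Matrix (Fin n × Fin m) (Fin n × Fin m) ℂ),
      A.PosSemidef → (tensorId T m A).PosSemidef) ∧
  (∀ A : Matrix (Fin n) (Fin n) ℂ, (T A).trace = A.trace)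

open Kronecker

section PositiveMap

variable {ι κ : Type*} [DecidableEq ι]

lemma posSemidef_single_one {R : Type*} [Ring R] [PartialOrder R] [StarRing R]
    [StarOrderedRing R] (j : ι) : (single j j (1 : R)).PosSemidef := by
  rw [← diagonal_single]
  exact .diagonal (Pi.single_nonneg.2 zero_le_one)

lemma map_diagonal_apply_self [Fintype ι] (T : Matrix ι ι ℂ →ₗ[ℂ] Matrix κ κ ℂ) (v : ι → ℂ)
    (i : κ) : T (diagonal v) i i = ∑ j, v j * T (single j j 1) i i := by
  rw [← sum_single_eq_diagonal, map_sum, Matrix.sum_apply]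
  refine Finset.sum_congr rfl fun j _ => ?_
  conv_lhs => rw [← mul_one (v j), ← smul_eq_mul, ← smul_single, map_smul]
  rfl

def transitionMatrix (T : Matrix ι ι ℂ →ₗ[ℂ] Matrix κ κ ℂ) : Matrix κ ι ℝ :=
  of fun i j => (T (single j j 1) i i).re

variable {T : Matrix ι ι ℂ →ₗ[ℂ] Matrix κ κ ℂ}

lemma transitionMatrix_nonneg (hT : ∀ X, X.PosSemidef → (T X).PosSemidef) (i : κ) (j : ι) :
    0 ≤ transitionMatrix T i j :=
  (Complex.nonneg_iff.1 (hT _ (posSemidef_single_one j)).diag_nonneg).1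

lemma ofReal_transitionMatrix (hT : ∀ X, X.PosSemidef → (T X).PosSemidef) (i : κ) (j : ι) :
    (transitionMatrix T i j : ℂ) = T (single j j 1) i i :=
  (Complex.eq_re_of_ofReal_le (r := 0) <| by
    simpa using (hT _ (posSemidef_single_one j)).diag_nonneg).symm

lemma map_diagonal_apply_self_eq_sum_transitionMatrix [Fintype ι]
    (hT : ∀ X, X.PosSemidef → (T X).PosSemidef) (v : ι → ℂ) (i : κ) :
    T (diagonal v) i i = ∑ j, (transitionMatrix T i j : ℂ) * v j := by
  simp only [map_diagonal_apply_self, ofReal_transitionMatrix hT, mul_comm]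

lemma sum_transitionMatrix [Fintype ι] [Fintype κ] (hT : ∀ X, X.PosSemidef → (T X).PosSemidef)
    (hTr : ∀ X, (T X).trace = X.trace) (j : ι) : ∑ i, transitionMatrix T i j = 1 := by
  have h := hTr (single j j 1)
  rw [trace_single_eq_same, trace] at h
  simp only [diag_apply, ← ofReal_transitionMatrix hT] at h
  exact_mod_cast h

end PositiveMap

section CompletelyPositive

variable {n k : ℕ}

def IsCompletelyPositive (T : Matrix (Fin n) (Fin n) ℂ →ₗ[ℂ] Matrix (Fin k) (Fin k) ℂ) : Prop :=
  ∀ (m : ℕ) (A : Matrix (Fin n × Fin m) (Fin n × Fin m) ℂ),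
    A.PosSemidef → (tensorId T m A).PosSemidef

lemma IsCompletelyPositive.posSemidef_map
    {T : Matrix (Fin n) (Fin n) ℂ →ₗ[ℂ] Matrix (Fin k) (Fin k) ℂ} (hT : IsCompletelyPositive T)
    {X : Matrix (Fin n) (Fin n) ℂ} (hX : X.PosSemidef) : (T X).PosSemidef :=
  (hT 1 _ (hX.submatrix Prod.fst)).submatrix fun i => (i, 0)

lemma tensorId_add (S T : Matrix (Fin n) (Fin n) ℂ →ₗ[ℂ] Matrix (Fin k) (Fin k) ℂ) (m : ℕ)
    (A : Matrix (Fin n × Fin m) (Fin n × Fin m) ℂ) :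
    tensorId (S + T) m A = tensorId S m A + tensorId T m A :=
  rfl

lemma tensorId_smul (c : ℂ) (T : Matrix (Fin n) (Fin n) ℂ →ₗ[ℂ] Matrix (Fin k) (Fin k) ℂ)
    (m : ℕ) (A : Matrix (Fin n × Fin m) (Fin n × Fin m) ℂ) :
    tensorId (c • T) m A = c • tensorId T m A :=
  rfl

lemma isCompletelyPositive_sum_smul {α : Type*} (s : Finset α) {c : α → ℝ} (hc : ∀ a, 0 ≤ c a)
    {T : α → Matrix (Fin n) (Fin n) ℂ →ₗ[ℂ] Matrix (Fin k) (Fin k) ℂ}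
    (hT : ∀ a, IsCompletelyPositive (T a)) :
    IsCompletelyPositive (∑ a ∈ s, (c a : ℂ) • T a) := by
  intro m A hA
  classical
  induction s using Finset.induction_on with
  | empty => exact PosSemidef.zero
  | insert a s ha ih =>
    rw [Finset.sum_insert ha, tensorId_add, tensorId_smul]
    exact ((hT a m A hA).smul (hc a)).add ih

def conjMap (K : Matrix (Fin k) (Fin n) ℂ) :
    Matrix (Fin n) (Fin n) ℂ →ₗ[ℂ] Matrix (Fin k) (Fin k) ℂ where
  toFun X := K * X * Kᴴ
  map_add' X Y := by rw [Matrix.mul_add, Matrix.add_mul]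
  map_smul' c X := by rw [Matrix.mul_smul, Matrix.smul_mul]; rfl

-- Without the second type ascription the outer `*` elaborates as `CStarMatrix` multiplication.
lemma tensorId_conjMap (K : Matrix (Fin k) (Fin n) ℂ) (m : ℕ)
    (A : Matrix (Fin n × Fin m) (Fin n × Fin m) ℂ) :
    tensorId (conjMap K) m A =
      K ⊗ₖ (1 : Matrix (Fin m) (Fin m) ℂ) * A * (K ⊗ₖ (1 : Matrix (Fin m) (Fin m) ℂ))ᴴ := by
  ext ⟨a, p⟩ ⟨b, q⟩
  simp [tensorId, conjMap, mul_apply, Fintype.sum_prod_type, one_apply, Finset.sum_mul,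
    apply_ite (starRingEnd ℂ), mul_ite, Finset.sum_ite_eq]

lemma isCompletelyPositive_conjMap (K : Matrix (Fin k) (Fin n) ℂ) :
    IsCompletelyPositive (conjMap K) := fun m A hA => by
  rw [tensorId_conjMap]
  exact hA.mul_mul_conjTranspose_same _

end CompletelyPositive

section StochasticChannel

variable {n : ℕ}

lemma conjMap_single_one (i k : Fin n) (X : Matrix (Fin n) (Fin n) ℂ) :
    conjMap (single i k 1) X = single i i (X k k) := by
  simp [conjMap]

def stochasticChannel (M : Matrix (Fin n) (Fin n) ℝ) :
    Matrix (Fin n) (Fin n) ℂ →ₗ[ℂ] Matrix (Fin n) (Fin n) ℂ :=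
  ∑ p : Fin n × Fin n, (M p.1 p.2 : ℂ) • conjMap (single p.1 p.2 1)

variable {M : Matrix (Fin n) (Fin n) ℝ}

lemma stochasticChannel_apply (X : Matrix (Fin n) (Fin n) ℂ) :
    stochasticChannel M X = diagonal fun i => ∑ k, (M i k : ℂ) * X k k := by
  rw [← sum_single_eq_diagonal, stochasticChannel, LinearMap.coe_sum, Finset.sum_apply,
    Fintype.sum_prod_type]
  refine Finset.sum_congr rfl fun i _ => ?_
  simp only [LinearMap.smul_apply, conjMap_single_one, smul_single, smul_eq_mul]
  exact (map_sum (singleAddMonoidHom (α := ℂ) i i) _ _).symm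

lemma isCompletelyPositive_stochasticChannel (hM : ∀ i j, 0 ≤ M i j) :
    IsCompletelyPositive (stochasticChannel M) :=
  isCompletelyPositive_sum_smul (c := fun p : Fin n × Fin n => M p.1 p.2)
    (T := fun p => conjMap (single p.1 p.2 1)) _ (fun p => hM p.1 p.2)
    fun _ => isCompletelyPositive_conjMap _

lemma trace_stochasticChannel (hM : ∀ j, ∑ i, M i j = 1) (X : Matrix (Fin n) (Fin n) ℂ) :
    (stochasticChannel M X).trace = X.trace := by
  rw [stochasticChannel_apply, trace_diagonal, Finset.sum_comm, trace]
  refine Finset.sum_congr rfl fun k _ => ?_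
  rw [← Finset.sum_mul, ← Complex.ofReal_sum, hM k, Complex.ofReal_one, one_mul, diag_apply]

end StochasticChannel

theorem d_majorization_diagonal_general
    {n : ℕ} (d : Fin n → ℝ)
    (A B : Matrix (Fin n) (Fin n) ℂ) (hA : A.IsDiag) (hB : B.IsDiag) :
    (∃ T : Matrix (Fin n) (Fin n) ℂ →ₗ[ℂ] Matrix (Fin n) (Fin n) ℂ,
        IsQuantumChannel T ∧
        T (Matrix.diagonal fun i => (d i : ℂ)) = (Matrix.diagonal fun i => (d i : ℂ)) ∧
        T B = A) ↔
      (∃ M : Matrix (Fin n) (Fin n) ℝ,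
        (∀ i j, 0 ≤ M i j) ∧ (∀ j, ∑ i, M i j = 1) ∧ M.mulVec d = d ∧
        (∀ i, ∑ j, (M i j : ℂ) * B j j = A i i)) := by
  constructor
  · rintro ⟨T, ⟨hCP, hTr⟩, hD, hTB⟩
    have hT : ∀ X, X.PosSemidef → (T X).PosSemidef := fun _ =>
      IsCompletelyPositive.posSemidef_map hCP
    refine ⟨transitionMatrix T, transitionMatrix_nonneg hT, sum_transitionMatrix hT hTr,
      funext fun i => ?_, fun i => ?_⟩
    · have h := congr($hD i i)
      rw [map_diagonal_apply_self_eq_sum_transitionMatrix hT, diagonal_apply_eq] at h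
      exact_mod_cast h
    · have h := map_diagonal_apply_self_eq_sum_transitionMatrix hT B.diag i
      rw [hB.diagonal_diag, hTB] at h
      exact h.symm
  · rintro ⟨M, hM0, hMcol, hMd, hMB⟩
    refine ⟨stochasticChannel M, ⟨isCompletelyPositive_stochasticChannel hM0,
      trace_stochasticChannel hMcol⟩, ?_, ?_⟩
    · rw [stochasticChannel_apply]
      refine congr_arg diagonal (funext fun i => ?_)
      simpa [mulVec, dotProduct] using congr(($hMd i : ℂ))
    · rw [stochasticChannel_apply, ← hA.diagonal_diag]
      exact congr_arg diagonal (funext hMB)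

/-- For diagonal matrices `A, B` and `D = diag d` with `d > 0`, `A ≺_D B` (existence of a
channel fixing `D` and sending `B` to `A`) holds iff the diagonal of `B` `d`-majorizes the
diagonal of `A`, i.e. some column-stochastic matrix `M` with `M d = d` maps diag `B` to
diag `A`. -/
theorem d_majorization_diagonal
    {n : ℕ} (d : Fin n → ℝ) (hd : ∀ i, 0 < d i)
    (A B : Matrix (Fin n) (Fin n) ℂ) (hA : A.IsDiag) (hB : B.IsDiag) :
    (∃ T : Matrix (Fin n) (Fin n) ℂ →ₗ[ℂ] Matrix (Fin n) (Fin n) ℂ,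
        IsQuantumChannel T ∧
        T (Matrix.diagonal fun i => (d i : ℂ)) = (Matrix.diagonal fun i => (d i : ℂ)) ∧
        T B = A) ↔
      (∃ M : Matrix (Fin n) (Fin n) ℝ,
        (∀ i j, 0 ≤ M i j) ∧ (∀ j, ∑ i, M i j = 1) ∧ M.mulVec d = d ∧
        (∀ i, ∑ j, (M i j : ℂ) * B j j = A i i)) :=
  d_majorization_diagonal_general d A B hA hB
end

section
/- Let d ∈ ℝⁿ have strictly positive entries with Σⱼ dⱼ = 1, D = diag(d), and let k be an index at which d attains its minimum. Then for every density matrix ρ there exists a quantum channel T with T(D) = D and T(|e_k⟩⟨e_k|) = ρ; i.e. the pure state |e_k⟩⟨e_k| is maximal with respect to D-majorization. -/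
open Matrix
open scoped ComplexOrder

/-!
Measure in the standard basis and prepare `ρ` on outcome `k` and
`τ = (D - d_k ρ) / (1 - d_k)` on every other outcome (if `d_k = 1`, then `D - d_k ρ` is positive
with trace `0`, hence `0`, and any state `τ` will do). This entanglement-breaking channel sends
`|e_k⟩⟨e_k|` to `ρ` and `D` to `d_k ρ + (1 - d_k) τ = D`. The only thing to check is that `τ` is a
state, i.e. `D - d_k ρ ⪰ 0`, which holds because `ρ ⪯ tr ρ • 1 = 1` and `d_k • 1 ⪯ D`.
-/

namespace Matrix

variable {ι : Type*} [Fintype ι] [DecidableEq ι]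

theorem PosSemidef.posSemidef_trace_smul_one_sub {A : Matrix ι ι ℂ} (hA : A.PosSemidef) :
    (A.trace • (1 : Matrix ι ι ℂ) - A).PosSemidef := by
  set U := hA.isHermitian.eigenvectorUnitary
  set ev := hA.isHermitian.eigenvalues
  have hconj : A.trace • (1 : Matrix ι ι ℂ) - A
      = (U : Matrix ι ι ℂ) * diagonal (fun i => ((∑ j, ev j) - ev i : ℝ) : ι → ℂ) *
        star (U : Matrix ι ι ℂ) := by
    have hdiag : diagonal (fun i => ((∑ j, ev j) - ev i : ℝ) : ι → ℂ)
        = (∑ j, (ev j : ℂ)) • 1 - diagonal (RCLike.ofReal ∘ ev) := by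
      ext i j
      by_cases h : i = j <;> simp [h]
    have hspec : A = (U : Matrix ι ι ℂ) * diagonal (RCLike.ofReal ∘ ev) *
        star (U : Matrix ι ι ℂ) :=
      hA.isHermitian.spectral_theorem
    rw [hdiag, mul_sub, sub_mul, ← hspec, mul_smul_comm, smul_mul_assoc, mul_one,
      Unitary.mul_star_self_of_mem U.2, hA.isHermitian.trace_eq_sum_eigenvalues]
    rfl
  rw [hconj, (Unitary.isUnit_coe).posSemidef_star_right_conjugate_iff, posSemidef_diagonal_iff]
  intro i
  have := Finset.single_le_sum (fun j _ => hA.eigenvalues_nonneg j) (Finset.mem_univ i)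
  exact_mod_cast sub_nonneg.mpr this

theorem PosSemidef.diagonal_sub_smul {A : Matrix ι ι ℂ} (hA : A.PosSemidef) (hAtr : A.trace = 1)
    {d : ι → ℝ} {c : ℝ} (hc : 0 ≤ c) (hcd : ∀ i, c ≤ d i) :
    (diagonal (fun i => (d i : ℂ)) - (c : ℂ) • A).PosSemidef := by
  have hsplit : diagonal (fun i => (d i : ℂ)) - (c : ℂ) • A
      = diagonal (fun i => ((d i - c : ℝ) : ℂ)) + (c : ℂ) • (A.trace • 1 - A) := by
    ext i j
    by_cases h : i = j
    · subst h; simp [hAtr]; ring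
    · simp [h]
  rw [hsplit]
  refine .add ?_ (hA.posSemidef_trace_smul_one_sub.smul (by exact_mod_cast hc))
  exact posSemidef_diagonal_iff.mpr fun i => by exact_mod_cast sub_nonneg.mpr (hcd i)

theorem PosSemidef.exists_eq_trace_smul [Nonempty ι] {P : Matrix ι ι ℂ} (hP : P.PosSemidef) :
    ∃ σ : Matrix ι ι ℂ, σ.PosSemidef ∧ σ.trace = 1 ∧ P = P.trace • σ := by
  by_cases htr : P.trace = 0
  · obtain ⟨i⟩ := ‹Nonempty ι›
    refine ⟨single i i 1, ?_, by simp, by simp [hP.trace_eq_zero_iff.mp htr]⟩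
    rw [← diagonal_single]
    exact .diagonal fun j => by by_cases h : j = i <;> simp [h]
  · refine ⟨P.trace⁻¹ • P, hP.smul (inv_nonneg_of_nonneg hP.trace_nonneg), by simp [htr],
      by simp [smul_smul, htr]⟩

end Matrix

noncomputable def measurePrepare {n : ℕ} (σ : Fin n → Matrix (Fin n) (Fin n) ℂ) :
    Matrix (Fin n) (Fin n) ℂ →ₗ[ℂ] Matrix (Fin n) (Fin n) ℂ where
  toFun A := ∑ i, A i i • σ i
  map_add' A B := by simp only [Matrix.add_apply, add_smul, Finset.sum_add_distrib]
  map_smul' c A := by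
    simp only [Matrix.smul_apply, smul_eq_mul, mul_smul, Finset.smul_sum, RingHom.id_apply]

theorem measurePrepare_apply {n : ℕ} (σ : Fin n → Matrix (Fin n) (Fin n) ℂ)
    (A : Matrix (Fin n) (Fin n) ℂ) : measurePrepare σ A = ∑ i, A i i • σ i := rfl

theorem tensorId_measurePrepare {n : ℕ} (σ : Fin n → Matrix (Fin n) (Fin n) ℂ) (m : ℕ)
    (A : Matrix (Fin n × Fin m) (Fin n × Fin m) ℂ) :
    tensorId (measurePrepare σ) m A
      = ∑ i, kroneckerMap (· * ·) (σ i) (A.submatrix (fun p => (i, p)) (fun q => (i, q))) := by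
  ext ⟨p₁, p₂⟩ ⟨q₁, q₂⟩
  simp [tensorId, measurePrepare_apply, Matrix.sum_apply, mul_comm]

theorem isQuantumChannel_measurePrepare {n : ℕ} {σ : Fin n → Matrix (Fin n) (Fin n) ℂ}
    (hσ : ∀ i, (σ i).PosSemidef) (hσtr : ∀ i, (σ i).trace = 1) :
    IsQuantumChannel (measurePrepare σ) := by
  refine ⟨fun m A hA => ?_, fun A => ?_⟩
  · rw [tensorId_measurePrepare]
    exact posSemidef_sum _ fun i _ => (hσ i).kronecker (hA.submatrix _)
  · simp only [measurePrepare_apply, trace_sum, trace_smul, hσtr, smul_eq_mul, mul_one]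
    rfl

theorem measurePrepare_update_apply {n : ℕ} (k : Fin n) (ρ τ : Matrix (Fin n) (Fin n) ℂ)
    (A : Matrix (Fin n) (Fin n) ℂ) :
    measurePrepare (Function.update (fun _ => τ) k ρ) A = A k k • ρ + (A.trace - A k k) • τ := by
  rw [measurePrepare_apply, trace, ← Finset.add_sum_erase _ _ (Finset.mem_univ k),
    ← Finset.add_sum_erase _ A.diag (Finset.mem_univ k), Function.update_self,
    Finset.sum_congr rfl fun i hi => by rw [Function.update_of_ne (Finset.ne_of_mem_erase hi)],
    ← Finset.sum_smul, diag_apply, add_sub_cancel_left]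
  rfl

/-- If `d` has positive entries summing to `1` and `d_k` is minimal, then the pure state
`|e_k⟩⟨e_k|` is maximal w.r.t. `D`-majorization: every density matrix `ρ` satisfies
`ρ ≺_D |e_k⟩⟨e_k|`. -/
theorem pure_state_maximal
    {n : ℕ} (d : Fin n → ℝ) (hd : ∀ i, 0 < d i) (hsum : ∑ i, d i = 1)
    (k : Fin n) (hk : ∀ i, d k ≤ d i)
    (ρ : Matrix (Fin n) (Fin n) ℂ) (hρ : ρ.PosSemidef) (hρtr : ρ.trace = 1) :
    ∃ T : Matrix (Fin n) (Fin n) ℂ →ₗ[ℂ] Matrix (Fin n) (Fin n) ℂ,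
      IsQuantumChannel T ∧
      T (Matrix.diagonal fun i => (d i : ℂ)) = (Matrix.diagonal fun i => (d i : ℂ)) ∧
      T (Matrix.single k k 1) = ρ := by
  have hDtr : (diagonal fun i => (d i : ℂ)).trace = 1 := by
    simpa [trace_diagonal] using congrArg Complex.ofReal hsum
  have : Nonempty (Fin n) := ⟨k⟩
  obtain ⟨τ, hτ, hτtr, hτD⟩ := (hρ.diagonal_sub_smul hρtr (hd k).le hk).exists_eq_trace_smul
  rw [trace_sub, trace_smul, hDtr, hρtr, smul_eq_mul, mul_one] at hτD
  refine ⟨measurePrepare (Function.update (fun _ => τ) k ρ), isQuantumChannel_measurePrepare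
    (fun i => ?_) (fun i => ?_), ?_, ?_⟩
  · by_cases h : i = k <;> simp [h, hρ, hτ]
  · by_cases h : i = k <;> simp [h, hρtr, hτtr]
  · rw [measurePrepare_update_apply, hDtr, diagonal_apply_eq, ← hτD, add_sub_cancel]
  · simp [measurePrepare_update_apply]
end
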